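/- arXiv:1605.01034 — 2 statements merged into one kernel-verified Lean document; each statement's English description precedes it below -/
import Mathlib

section
/- Let (R, m) be a Noetherian local ring and let a_1 ⊇ a_2 ⊇ a_3 ⊇ ⋯ be a decreasing sequence of m-primary ideals of R forming a graded sequence, i.e. a_i · a_j ⊆ a_{i+j} for all i, j ≥ 1 (with a_0 = R). Assume the linear topology on R defined by the filtration a_1 ⊇ a_2 ⊇ ⋯ coincides with the m-adic topology, i.e. for every k ≥ 1 there exists m ≥ 1 with a_m ⊆ m^k (the converse containment being automatic since each a_m is m-primary). If the associated graded ring ⨁_{m≥0} a_m/a_{m+1} is a finitely generated algebra over R/a_1, then the Rees-type algebra ⨁_{m≥0} a_m (realized, e.g., as the R-subalgebra of the polynomial ring R[T] consisting of polynomials whose coefficient of T^m lies in a_m for every m) is a finitely generated R-algebra. -/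
set_option synthInstance.maxHeartbeats 1000000
/-- The Rees-type algebra `⨁_{m≥0} a_m` of a graded sequence of ideals `a`, realized as the
`R`-subalgebra of the polynomial ring `R[T]` consisting of the polynomials whose coefficient
of `T^m` lies in `a m` for every `m`. -/
def reesSubalgebra {R : Type*} [CommRing R] (a : ℕ → Ideal R)
    (h0 : a 0 = ⊤)
    (hmul : ∀ i j : ℕ, ∀ x ∈ a i, ∀ y ∈ a j, x * y ∈ a (i + j)) :
    Subalgebra R (Polynomial R) where
  carrier := {p | ∀ m : ℕ, p.coeff m ∈ a m}
  add_mem' {p q} hp hq := fun m => by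
    rw [Polynomial.coeff_add]; exact (a m).add_mem (hp m) (hq m)
  mul_mem' {p q} hp hq := fun m => by
    rw [Polynomial.coeff_mul]
    refine Ideal.sum_mem _ fun x hx => ?_
    have hxm : x.1 + x.2 = m := Finset.HasAntidiagonal.mem_antidiagonal.mp hx
    simpa [hxm] using hmul x.1 x.2 _ (hp x.1) _ (hq x.2)
  algebraMap_mem' r := fun m => by
    rcases eq_or_ne m 0 with h | h
    · subst h
      simp [Polynomial.coeff_C, h0]
    · simp [Polynomial.coeff_C, h]

theorem mem_reesSubalgebra {R : Type*} [CommRing R] {a : ℕ → Ideal R}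
    {h0 : a 0 = ⊤} {hmul : ∀ i j : ℕ, ∀ x ∈ a i, ∀ y ∈ a j, x * y ∈ a (i + j)}
    {p : Polynomial R} :
    p ∈ reesSubalgebra a h0 hmul ↔ ∀ m : ℕ, p.coeff m ∈ a m :=
  Iff.rfl

/-- The ideal `⨁_{m≥0} a_{m+1} T^m` of the Rees-type algebra; the quotient by this ideal
is the associated graded ring `⨁_{m≥0} a_m / a_{m+1}` of the filtration. -/
def reesGradedIdeal {R : Type*} [CommRing R] (a : ℕ → Ideal R)
    (h0 : a 0 = ⊤)
    (hmul : ∀ i j : ℕ, ∀ x ∈ a i, ∀ y ∈ a j, x * y ∈ a (i + j)) :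
    Ideal (reesSubalgebra a h0 hmul) where
  carrier := {p | ∀ m : ℕ, (p : Polynomial R).coeff m ∈ a (m + 1)}
  zero_mem' := fun m => by simp
  add_mem' {p q} hp hq := fun m => by
    have : ((p + q : reesSubalgebra a h0 hmul) : Polynomial R)
        = (p : Polynomial R) + (q : Polynomial R) := rfl
    rw [this, Polynomial.coeff_add]
    exact (a (m + 1)).add_mem (hp m) (hq m)
  smul_mem' c {x} hx := fun m => by
    have hc : ∀ k : ℕ, (c : Polynomial R).coeff k ∈ a k := c.2
    have : ((c • x : reesSubalgebra a h0 hmul) : Polynomial R)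
        = (c : Polynomial R) * (x : Polynomial R) := rfl
    rw [this, Polynomial.coeff_mul]
    refine Ideal.sum_mem _ fun y hy => ?_
    have hym : y.1 + y.2 = m := Finset.HasAntidiagonal.mem_antidiagonal.mp hy
    have := hmul y.1 (y.2 + 1) _ (hc y.1) _ (hx y.2)
    have heq : y.1 + (y.2 + 1) = m + 1 := by omega
    rwa [heq] at this

/-!
Lift finitely many algebra generators of the associated graded ring to the Rees algebra, and let
`B ⊆ R[T]` be generated by the monomials `x T^t` with `x T^d` a homogeneous component of one of
the lifts and `t ≤ d`. Let `b_m` be the ideal of those `x` with `x T^t ∈ B` for all `t ≤ m`; it is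
antitone and `⨁ b_m T^m ⊆ B ⊆ ⨁ a_m T^m`. Generation of the graded ring gives
`a_m ⊆ b_m + a_{m+1}`, hence `a_m ⊆ b_m + a_{m+k}` for every `k`. As `a_{m+k}` eventually lies in
every power of `𝔪`, Krull's intersection theorem for `R ⧸ b_m` yields `a_m ⊆ b_m`, so the Rees
algebra is `B`.
-/

universe u

open Polynomial IsLocalRing

theorem Ideal.mem_of_forall_mem_sup_maximalIdeal_pow {R : Type*} [CommRing R]
    [IsNoetherianRing R] [IsLocalRing R] {I : Ideal R} {x : R}
    (h : ∀ n : ℕ, x ∈ I ⊔ maximalIdeal R ^ n) : x ∈ I := by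
  rw [← Ideal.Quotient.eq_zero_iff_mem]
  refine IsHausdorff.haus (I := maximalIdeal R) inferInstance _ fun n => ?_
  obtain ⟨y, hy, z, hz, rfl⟩ := Submodule.mem_sup.mp (h n)
  rw [SModEq.zero, map_add, Ideal.Quotient.eq_zero_iff_mem.mpr hy, zero_add]
  simpa [Algebra.smul_def] using
    Submodule.smul_mem_smul hz (Submodule.mem_top (x := (1 : R ⧸ I)))

theorem le_sup_add_of_le_sup_succ {α : Type*} [SemilatticeSup α] {a b : ℕ → α}
    (hb : Antitone b) (h : ∀ j, a j ≤ b j ⊔ a (j + 1)) (m : ℕ) :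
    ∀ k, a m ≤ b m ⊔ a (m + k)
  | 0 => le_sup_right
  | k + 1 => (le_sup_add_of_le_sup_succ hb h m k).trans <|
      sup_le le_sup_left <| (h (m + k)).trans <| sup_le_sup_right (hb (Nat.le_add_right m k)) _

theorem le_of_forall_le_sup_succ {R : Type*} [CommRing R] [IsNoetherianRing R] [IsLocalRing R]
    {a b : ℕ → Ideal R} (ha : Antitone a) (hb : Antitone b) (h : ∀ j, a j ≤ b j ⊔ a (j + 1))
    (htop : ∀ k : ℕ, 1 ≤ k → ∃ m : ℕ, a m ≤ maximalIdeal R ^ k) (m : ℕ) :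
    a m ≤ b m := by
  intro x hx
  refine Ideal.mem_of_forall_mem_sup_maximalIdeal_pow fun k => ?_
  rcases Nat.eq_zero_or_pos k with rfl | hk
  · simp
  obtain ⟨n, hn⟩ := htop k hk
  exact sup_le_sup_left ((ha (Nat.le_add_left n m)).trans hn) _
    (le_sup_add_of_le_sup_succ hb h m n hx)

section Rees

variable {R : Type u} [CommRing R]

theorem C_mul_X_pow_mem_reesSubalgebra {a : ℕ → Ideal R} {h0 : a 0 = ⊤}
    {hmul : ∀ i j : ℕ, ∀ x ∈ a i, ∀ y ∈ a j, x * y ∈ a (i + j)} {x : R} {m : ℕ}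
    (hx : x ∈ a m) : C x * X ^ m ∈ reesSubalgebra a h0 hmul := fun n => by
  rw [coeff_C_mul_X_pow]
  split_ifs with h
  · exact h ▸ hx
  · exact zero_mem _

theorem reesSubalgebra_mono {a b : ℕ → Ideal R} {ha0 : a 0 = ⊤}
    {hamul : ∀ i j : ℕ, ∀ x ∈ a i, ∀ y ∈ a j, x * y ∈ a (i + j)} {hb0 : b 0 = ⊤}
    {hbmul : ∀ i j : ℕ, ∀ x ∈ b i, ∀ y ∈ b j, x * y ∈ b (i + j)} (h : ∀ m, b m ≤ a m) :
    reesSubalgebra b hb0 hbmul ≤ reesSubalgebra a ha0 hamul :=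
  fun _ hp m => h m (hp m)

theorem le_sup_succ_of_map_reesSubalgebra_eq_top {a b : ℕ → Ideal R} {ha0 : a 0 = ⊤}
    {hamul : ∀ i j : ℕ, ∀ x ∈ a i, ∀ y ∈ a j, x * y ∈ a (i + j)} {hb0 : b 0 = ⊤}
    {hbmul : ∀ i j : ℕ, ∀ x ∈ b i, ∀ y ∈ b j, x * y ∈ b (i + j)}
    (hgen : ((reesSubalgebra b hb0 hbmul).comap (reesSubalgebra a ha0 hamul).val).map
      (Ideal.Quotient.mkₐ R (reesGradedIdeal a ha0 hamul)) = ⊤) (j : ℕ) :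
    a j ≤ b j ⊔ a (j + 1) := by
  intro x hx
  set p : reesSubalgebra a ha0 hamul := ⟨C x * X ^ j, C_mul_X_pow_mem_reesSubalgebra hx⟩
  obtain ⟨q, hqb, hq⟩ := Subalgebra.mem_map.mp (hgen ▸ Algebra.mem_top :
    Ideal.Quotient.mkₐ R (reesGradedIdeal a ha0 hamul) p ∈ _)
  have hpq : ∀ m, ((p - q : reesSubalgebra a ha0 hamul) : R[X]).coeff m ∈ a (m + 1) :=
    Ideal.Quotient.eq.mp hq.symm
  have hcoeff :
      ((p - q : reesSubalgebra a ha0 hamul) : R[X]).coeff j = x - (q : R[X]).coeff j := by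
    simp [p]
  exact Submodule.mem_sup.mpr ⟨_, hqb j, _, hcoeff ▸ hpq j, add_sub_cancel _ _⟩

end Rees

namespace Subalgebra

variable {R : Type u} [CommRing R] (B : Subalgebra R R[X])

def monomialIdeal (m : ℕ) : Ideal R where
  carrier := {x | ∀ t ≤ m, C x * X ^ t ∈ B}
  zero_mem' t _ := by simp
  add_mem' hx hy t ht := by simpa [add_mul] using add_mem (hx t ht) (hy t ht)
  smul_mem' r x hx t ht := by
    simpa [mul_assoc] using mul_mem (B.algebraMap_mem r) (hx t ht)

theorem monomialIdeal_zero : B.monomialIdeal 0 = ⊤ :=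
  eq_top_iff.mpr fun x _ t ht => by
    simpa [Nat.le_zero.mp ht] using B.algebraMap_mem x

theorem monomialIdeal_antitone : Antitone B.monomialIdeal :=
  fun _ _ hmn _ hx t ht => hx t (ht.trans hmn)

theorem mul_mem_monomialIdeal (i j : ℕ) :
    ∀ x ∈ B.monomialIdeal i, ∀ y ∈ B.monomialIdeal j, x * y ∈ B.monomialIdeal (i + j) := by
  intro x hx y hy t ht
  have hsplit : min i t + (t - min i t) = t := by omega
  rw [← hsplit, pow_add, C_mul, mul_mul_mul_comm]
  exact mul_mem (hx _ (min_le_left i t)) (hy _ (by omega))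

theorem reesSubalgebra_monomialIdeal_le :
    reesSubalgebra B.monomialIdeal B.monomialIdeal_zero B.mul_mem_monomialIdeal ≤ B :=
      fun p hp => by
  rw [← p.sum_C_mul_X_pow_eq, sum_def]
  exact sum_mem fun m _ => hp m m le_rfl

end Subalgebra

section ShiftedMonomials

variable {R : Type u} [CommRing R]

open Classical in
noncomputable def shiftedMonomials (S : Finset R[X]) : Finset R[X] :=
  S.biUnion fun p => p.support.biUnion fun d =>
    (Finset.range (d + 1)).image fun t => C (p.coeff d) * X ^ t

theorem adjoin_shiftedMonomials_le_reesSubalgebra {S : Finset R[X]} {a : ℕ → Ideal R}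
    {h0 : a 0 = ⊤} {hmul : ∀ i j : ℕ, ∀ x ∈ a i, ∀ y ∈ a j, x * y ∈ a (i + j)}
    (ha : Antitone a) (hS : ∀ p ∈ S, p ∈ reesSubalgebra a h0 hmul) :
    Algebra.adjoin R (shiftedMonomials S : Set R[X]) ≤ reesSubalgebra a h0 hmul := by
  refine Algebra.adjoin_le fun q hq => ?_
  simp only [shiftedMonomials, Finset.coe_biUnion, Finset.coe_image, Set.mem_iUnion,
    Set.mem_image, Finset.mem_coe, Finset.mem_range] at hq
  obtain ⟨p, hp, d, -, t, ht, rfl⟩ := hq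
  exact C_mul_X_pow_mem_reesSubalgebra (ha (Nat.lt_succ_iff.mp ht) (hS p hp d))

theorem mem_reesSubalgebra_monomialIdeal_adjoin_shiftedMonomials {S : Finset R[X]} {p : R[X]}
    (hp : p ∈ S) :
    p ∈ reesSubalgebra (Algebra.adjoin R (shiftedMonomials S : Set R[X])).monomialIdeal
      (Subalgebra.monomialIdeal_zero _) (Subalgebra.mul_mem_monomialIdeal _) := by
  intro d t ht
  by_cases hd : d ∈ p.support
  · refine Algebra.subset_adjoin ?_
    simp only [shiftedMonomials, Finset.coe_biUnion, Finset.coe_image, Set.mem_iUnion,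
      Set.mem_image, Finset.mem_coe, Finset.mem_range]
    exact ⟨p, hp, d, hd, t, Nat.lt_succ_of_le ht, rfl⟩
  · simp [notMem_support_iff.mp hd]

end ShiftedMonomials

theorem reesSubalgebra_fg_of_gr_finiteType_general
    {R : Type*} [CommRing R] [IsNoetherianRing R] [IsLocalRing R]
    (a : ℕ → Ideal R)
    (h0 : a 0 = ⊤)
    (hdec : ∀ i : ℕ, a (i + 1) ≤ a i)
    (hmul : ∀ i j : ℕ, ∀ x ∈ a i, ∀ y ∈ a j, x * y ∈ a (i + j))
    (htop : ∀ k : ℕ, 1 ≤ k → ∃ m : ℕ, 1 ≤ m ∧ a m ≤ (IsLocalRing.maximalIdeal R) ^ k)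
    (hgr : Algebra.FiniteType R
      ((reesSubalgebra a h0 hmul) ⧸ (reesGradedIdeal a h0 hmul))) :
    (reesSubalgebra a h0 hmul).FG := by
  classical
  obtain ⟨s, hs⟩ := hgr.out
  choose lift hlift using Ideal.Quotient.mk_surjective (I := reesGradedIdeal a h0 hmul)
  set S := s.image fun g => (lift g : R[X])
  set B := Algebra.adjoin R (shiftedMonomials S : Set R[X])
  have ha : Antitone a := antitone_nat_of_succ_le hdec
  have hBa : B ≤ reesSubalgebra a h0 hmul :=
    adjoin_shiftedMonomials_le_reesSubalgebra ha (by simp [S, SetLike.coe_mem])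
  have hgen : ((reesSubalgebra B.monomialIdeal B.monomialIdeal_zero
      B.mul_mem_monomialIdeal).comap (reesSubalgebra a h0 hmul).val).map
      (Ideal.Quotient.mkₐ R (reesGradedIdeal a h0 hmul)) = ⊤ := by
    rw [eq_top_iff, ← hs]
    refine Algebra.adjoin_le fun g hg => ⟨lift g, ?_, hlift g⟩
    exact mem_reesSubalgebra_monomialIdeal_adjoin_shiftedMonomials (Finset.mem_image_of_mem _ hg)
  have haB : ∀ m, a m ≤ B.monomialIdeal m :=
    le_of_forall_le_sup_succ ha B.monomialIdeal_antitone
      (le_sup_succ_of_map_reesSubalgebra_eq_top hgen) fun k hk => (htop k hk).imp fun _ => And.right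
  exact ⟨shiftedMonomials S, le_antisymm hBa
    ((reesSubalgebra_mono haB).trans B.reesSubalgebra_monomialIdeal_le)⟩

/-- Let `(R, 𝔪)` be a Noetherian local ring and let `a_1 ⊇ a_2 ⊇ ⋯` be a decreasing graded
sequence of `𝔪`-primary ideals (with `a_0 = R`).  Assume the linear topology defined by the
filtration coincides with the `𝔪`-adic topology, i.e. for every `k ≥ 1` there is `m ≥ 1`
with `a_m ⊆ 𝔪^k`.  If the associated graded ring `⨁_{m≥0} a_m / a_{m+1}` (realized as the
quotient of the Rees-type algebra by `reesGradedIdeal`) is a finitely generated algebra,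
then the Rees-type algebra `⨁_{m≥0} a_m` is a finitely generated `R`-algebra. -/
theorem reesSubalgebra_fg_of_gr_finiteType
    {R : Type*} [CommRing R] [IsNoetherianRing R] [IsLocalRing R]
    (a : ℕ → Ideal R)
    (h0 : a 0 = ⊤)
    (hdec : ∀ i : ℕ, a (i + 1) ≤ a i)
    (hmul : ∀ i j : ℕ, ∀ x ∈ a i, ∀ y ∈ a j, x * y ∈ a (i + j))
    (hprimary : ∀ i : ℕ, 1 ≤ i → (a i).radical = IsLocalRing.maximalIdeal R)
    (htop : ∀ k : ℕ, 1 ≤ k → ∃ m : ℕ, 1 ≤ m ∧ a m ≤ (IsLocalRing.maximalIdeal R) ^ k)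
    (hgr : Algebra.FiniteType R
      ((reesSubalgebra a h0 hmul) ⧸ (reesGradedIdeal a h0 hmul))) :
    (reesSubalgebra a h0 hmul).FG :=
  reesSubalgebra_fg_of_gr_finiteType_general a h0 hdec hmul htop hgr
end

section
/- Let (R, m) be a Noetherian local ring and let p, q be two prime ideals of R satisfying p + q = m and p ∩ q = p·q. If the quotient ring R/q is a discrete valuation ring, then p is a principal ideal. -/
/-!
Since `p + q = 𝔪`, the image of `p` in the discrete valuation ring `R/q` is its maximal ideal,
so some `a ∈ p` maps to a uniformizer. Then `p ⊆ (a) + (p ∩ q) = (a) + p·q ⊆ (a) + 𝔪·p`, and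
Nakayama's lemma gives `p = (a)`.
-/

open IsLocalRing Ideal

theorem Ideal.exists_mem_le_span_singleton_sup_inf_ker {R S : Type*} [CommRing R] [CommRing S]
    {f : R →+* S} (hf : Function.Surjective f) {I : Ideal R} (hI : (I.map f).IsPrincipal) :
    ∃ a ∈ I, I ≤ span {a} ⊔ I ⊓ RingHom.ker f := by
  obtain ⟨b, hb⟩ := hI
  have hbI : b ∈ I.map f := hb ▸ mem_span_singleton_self b
  obtain ⟨a, haI, rfl⟩ := (mem_map_iff_of_surjective f hf).mp hbI
  have hmap : I.map f = (span {a}).map f := by rw [hb, map_span, Set.image_singleton]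
  refine ⟨a, haI, ?_⟩
  calc I ≤ I ⊓ (I.map f).comap f := le_inf le_rfl le_comap_map
    _ = I ⊓ (span {a} ⊔ RingHom.ker f) := by rw [hmap, comap_map_of_surjective' f hf]
    _ = span {a} ⊔ I ⊓ RingHom.ker f := by
      rw [inf_comm, sup_inf_assoc_of_le _ ((span_singleton_le_iff_mem I).mpr haI),
        inf_comm (RingHom.ker f)]

theorem Ideal.eq_span_singleton_of_le_sup_maximalIdeal_mul {R : Type*} [CommRing R]
    [IsNoetherianRing R] [IsLocalRing R] {I : Ideal R} {a : R} (ha : a ∈ I)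
    (h : I ≤ span {a} ⊔ maximalIdeal R * I) : I = span {a} :=
  le_antisymm
    (Submodule.le_of_le_smul_of_le_jacobson_bot (IsNoetherian.noetherian I)
      (maximalIdeal_le_jacobson ⊥) h)
    ((span_singleton_le_iff_mem I).mpr ha)

theorem IsLocalRing.map_mk_eq_maximalIdeal_of_sup_eq {R : Type*} [CommRing R] [IsLocalRing R]
    {p q : Ideal R} [IsLocalRing (R ⧸ q)] (h : p ⊔ q = maximalIdeal R) :
    p.map (Ideal.Quotient.mk q) = maximalIdeal (R ⧸ q) := by
  rw [← map_maximalIdeal_of_surjective _ Ideal.Quotient.mk_surjective, ← h, Ideal.map_sup,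
    map_mk_eq_bot_of_le le_rfl, sup_bot_eq]

theorem isPrincipal_of_sup_eq_maximalIdeal_of_inf_eq_mul_general
    (R : Type*) [CommRing R] [IsNoetherianRing R] [IsLocalRing R]
    (p q : Ideal R) [q.IsPrime]
    (hsup : p ⊔ q = IsLocalRing.maximalIdeal R)
    (hinf : p ⊓ q = p * q)
    [IsDiscreteValuationRing (R ⧸ q)] :
    p.IsPrincipal := by
  have hprincipal : (p.map (Ideal.Quotient.mk q)).IsPrincipal := by
    rw [map_mk_eq_maximalIdeal_of_sup_eq hsup]
    exact IsPrincipalIdealRing.principal _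
  obtain ⟨a, ha, hle⟩ := exists_mem_le_span_singleton_sup_inf_ker
    Ideal.Quotient.mk_surjective hprincipal
  have hinf_le : p ⊓ RingHom.ker (Ideal.Quotient.mk q) ≤ maximalIdeal R * p := by
    rw [mk_ker, hinf, mul_comm]
    exact mul_mono_left (hsup ▸ le_sup_right)
  exact ⟨a, eq_span_singleton_of_le_sup_maximalIdeal_mul ha
    (hle.trans (sup_le_sup_left hinf_le _))⟩

/-- Let `(R, 𝔪)` be a Noetherian local ring and let `p`, `q` be two prime ideals of `R`
satisfying `p + q = 𝔪` and `p ∩ q = p·q`. If the quotient ring `R/q` is a discrete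
valuation ring, then `p` is a principal ideal. -/
theorem isPrincipal_of_sup_eq_maximalIdeal_of_inf_eq_mul
    (R : Type*) [CommRing R] [IsNoetherianRing R] [IsLocalRing R]
    (p q : Ideal R) [p.IsPrime] [q.IsPrime]
    (hsup : p ⊔ q = IsLocalRing.maximalIdeal R)
    (hinf : p ⊓ q = p * q)
    [IsDiscreteValuationRing (R ⧸ q)] :
    p.IsPrincipal :=
  isPrincipal_of_sup_eq_maximalIdeal_of_inf_eq_mul_general R p q hsup hinf
end
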